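/- arXiv:1912.04369 — 4 statements merged into one kernel-verified Lean document; each statement's English description precedes it below -/
import Mathlib

section
/- Let m be a positive integer and let h : ℤ_{≥0}^m → ℤ be order-preserving and bounded above. Then there exists a single finite subset S ⊆ ℤ_{≥0}^m such that for every integer c one has { w ∈ ℤ_{≥0}^m : h(w) ≥ c } = ⋃_{s ∈ S, h(s) ≥ c} ( s + ℤ_{≥0}^m ). In particular, for every w ∈ ℤ_{≥0}^m there exists s ∈ S with w ≽ s and h(s) = h(w). -/
/-!
By Dickson's lemma `ℕ^m` is well-quasi-ordered, so for each value `b` the minimal elements of the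
upper level set `{b ≤ h}` form a finite antichain. Since `h` is monotone and bounded (below by
`h 0`), it takes finitely many values, and `S` is the union of these finite sets of minimal
elements. Every `w` lies above a minimal element `s` of `{h w ≤ h}`, and then `h s = h w`.
-/

section WellQuasiOrdered

variable {α β : Type*} [PartialOrder α] [WellQuasiOrderedLE α]

theorem finite_setOf_minimal (P : α → Prop) : {x | Minimal P x}.Finite :=
  (setOfPred_minimal_antichain P).finite_of_partiallyWellOrderedOn
    (Set.isPWO_of_wellQuasiOrderedLE _)

theorem Monotone.exists_finset_le_apply_eq [PartialOrder β] {h : α → β} (hh : Monotone h)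
    (hfin : (Set.range h).Finite) : ∃ S : Finset α, ∀ w, ∃ s ∈ S, s ≤ w ∧ h s = h w := by
  have hS : (⋃ b ∈ Set.range h, {x | Minimal (b ≤ h ·) x}).Finite :=
    hfin.biUnion fun b _ => finite_setOf_minimal _
  refine ⟨hS.toFinset, fun w => ?_⟩
  obtain ⟨s, hsw, hmin⟩ := exists_minimal_le_of_wellFoundedLT (h w ≤ h ·) w le_rfl
  refine ⟨s, ?_, hsw, le_antisymm (hh hsw) hmin.1⟩
  simpa using ⟨w, hmin⟩

end WellQuasiOrdered

theorem Monotone.setOf_le_apply_eq_biUnion {α β : Type*} [Preorder α] [Preorder β] {h : α → β}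
    (hh : Monotone h) {S : Finset α} (hS : ∀ w, ∃ s ∈ S, s ≤ w ∧ h s = h w) (c : β) :
    {w | c ≤ h w} = ⋃ s ∈ S, ⋃ (_ : c ≤ h s), {w | s ≤ w} := by
  ext w
  simp only [Set.mem_ofPred_eq, Set.mem_iUnion, exists_prop]
  constructor
  · intro hw
    obtain ⟨s, hs, hsw, hsw_eq⟩ := hS w
    exact ⟨s, hs, hsw_eq ▸ hw, hsw⟩
  · rintro ⟨s, -, hcs, hsw⟩
    exact hcs.trans (hh hsw)

theorem exists_uniform_corner_set_general
    (m : ℕ)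
    (h : (Fin m → ℕ) → ℤ)
    (hmono : ∀ w w' : Fin m → ℕ, w' ≤ w → h w' ≤ h w)
    (hbdd : ∃ B : ℤ, ∀ w : Fin m → ℕ, h w ≤ B) :
    ∃ S : Finset (Fin m → ℕ),
      (∀ c : ℤ, {w : Fin m → ℕ | c ≤ h w}
          = ⋃ s ∈ S, ⋃ (_ : c ≤ h s), {w : Fin m → ℕ | s ≤ w}) ∧
      (∀ w : Fin m → ℕ, ∃ s ∈ S, s ≤ w ∧ h s = h w) := by
  obtain ⟨B, hB⟩ := hbdd
  have hh : Monotone h := fun w' w hw => hmono w w' hw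
  have hfin : (Set.range h).Finite := (Set.finite_Icc (h 0) B).subset <| by
    rintro _ ⟨w, rfl⟩
    exact ⟨hh fun _ => Nat.zero_le _, hB w⟩
  obtain ⟨S, hS⟩ := hh.exists_finset_le_apply_eq hfin
  exact ⟨S, hh.setOf_le_apply_eq_biUnion hS, hS⟩

/-- **Uniform corners for a bounded monotone function on `ℤ_{≥0}^m`.**
Let `h : ℤ_{≥0}^m → ℤ` (with `ℤ_{≥0}^m` modeled as `Fin m → ℕ`, componentwise
order) be order-preserving and bounded above.  Then there is a single finite set
`S ⊆ ℤ_{≥0}^m` such that for every integer `c`,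
`{w | h w ≥ c} = ⋃_{s ∈ S, h s ≥ c} (s + ℤ_{≥0}^m)`
(the translate `s + ℤ_{≥0}^m` being `{w | s ≤ w}`); in particular every
`w ∈ ℤ_{≥0}^m` satisfies `w ≽ s` for some `s ∈ S` with `h s = h w`. -/
theorem exists_uniform_corner_set
    (m : ℕ) (hm : 0 < m)
    (h : (Fin m → ℕ) → ℤ)
    (hmono : ∀ w w' : Fin m → ℕ, w' ≤ w → h w' ≤ h w)
    (hbdd : ∃ B : ℤ, ∀ w : Fin m → ℕ, h w ≤ B) :
    ∃ S : Finset (Fin m → ℕ),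
      (∀ c : ℤ, {w : Fin m → ℕ | c ≤ h w}
          = ⋃ s ∈ S, ⋃ (_ : c ≤ h s), {w : Fin m → ℕ | s ≤ w}) ∧
      (∀ w : Fin m → ℕ, ∃ s ∈ S, s ≤ w ∧ h s = h w) :=
  exists_uniform_corner_set_general m h hmono hbdd
end

section
/- Let G be a subgroup of W = V ⋊ S_4 such that: (i) the projection p : G → S_4 is surjective; (ii) the kernel of p restricted to G is exactly {(0, id), σ}, i.e. G ∩ V = {0, ε}; and (iii) the extension does not split, i.e. there is no subgroup H ≤ G for which p restricts to an isomorphism from H onto S_4. Then the affine action of G on V is transitive; equivalently, V consists of a single G-orbit of size 16. -/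
/-- `V = (ℤ/2ℤ)⁴`. -/
abbrev V4 : Type := Fin 4 → ZMod 2

/-- The action of `S₄` on `V = (ℤ/2ℤ)⁴` permuting the coordinates,
as an additive automorphism. -/
def permAddEquiv (π : Equiv.Perm (Fin 4)) : V4 ≃+ V4 where
  toFun w := fun i => w (π⁻¹ i)
  invFun w := fun i => w (π i)
  left_inv w := by funext i; simp
  right_inv w := by funext i; simp
  map_add' w₁ w₂ := rfl

/-- The corresponding homomorphism `S₄ →* Aut(V)` (with `V` written
multiplicatively so as to form the semidirect product). -/
def permHom : Equiv.Perm (Fin 4) →* MulAut (Multiplicative V4) where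
  toFun π := AddEquiv.toMultiplicative (permAddEquiv π)
  map_one' := by ext w; rfl
  map_mul' π₁ π₂ := by ext w; rfl

/-- `W = V ⋊ S₄`. -/
abbrev W4 : Type := SemidirectProduct (Multiplicative V4) (Equiv.Perm (Fin 4)) permHom

/-- `ε = (1,1,1,1) ∈ V`. -/
def epsV : V4 := fun _ => 1

/-- `σ = (ε, id) ∈ W`, the translation by `ε`. -/
def sigmaW : W4 := SemidirectProduct.inl (Multiplicative.ofAdd epsV)

/-- The affine action of `W = V ⋊ S₄` on `V`: `(v, π) · w = π(w) + v`. -/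
def aff (g : W4) (w : V4) : V4 :=
  fun i => w (g.right⁻¹ i) + Multiplicative.toAdd g.left i

/-!
For `g = (v, π)` the weight parity `∑ᵢ vᵢ` of the translation part is a homomorphism
`W → ℤ/2` killing `σ`, so it takes one value on all lifts in `G` of the (mutually conjugate)
transpositions. If that value is `0`, solving along the adjacent transpositions `(i i+1)` gives a
pair `{w, w + ε}` preserved by `G`, and the stabiliser of `w` in `G` is a complement of `⟨σ⟩`.
In the non-split case every transposition therefore lifts to elements of odd parity. Then the
stabiliser of `0` in `G` contains no lift of a transposition or of a double transposition, so by
the cycle types of `S₄` all its elements have order dividing `3`. A `3`-subgroup of the group `G`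
of order `48` has order at most `3`, so the orbit of `0` has all `16` elements.
-/

open Equiv SemidirectProduct

open scoped Pointwise

instance : MulAction W4 V4 where
  smul := aff
  one_smul w := by funext i; show aff 1 w i = w i; simp [aff]
  mul_smul g h w := by
    funext i
    show aff (g * h) w i = aff g (aff h w) i
    simp only [aff, mul_right, mul_left, mul_inv_rev, Perm.mul_apply, toAdd_mul, Pi.add_apply]
    rw [add_assoc, add_comm (Multiplicative.toAdd g.left i)]
    rfl

instance : Finite W4 := Finite.of_equiv _ SemidirectProduct.equivProd.symm

lemma Finset.sum_eq_zero_of_fixedPointFree_involution {ι R : Type*} [Fintype ι] [Semiring R]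
    [CharP R 2] {π : Perm ι} (hinv : π * π = 1) (hfree : ∀ i, π i ≠ i) {v : ι → R}
    (hv : ∀ i, v (π i) = v i) : ∑ i, v i = 0 :=
  Finset.sum_ninvolution π (fun i => by rw [hv, CharTwo.add_self_eq_zero]) (fun i _ => hfree i)
    (fun _ => Finset.mem_univ _) (fun i => by rw [← Perm.mul_apply, hinv, Perm.one_apply])

set_option maxRecDepth 10000 in
lemma Equiv.Perm.fin_four_cases (π : Perm (Fin 4)) :
    π ^ 3 = 1 ∨ π.IsSwap ∨ (π * π = 1 ∧ ∀ i, π i ≠ i) ∨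
      (π ^ 2 * π ^ 2 = 1 ∧ ∀ i, (π ^ 2) i ≠ i) :=
  (by decide : ∀ π : Perm (Fin 4), π ^ 3 = 1 ∨ (∃ x y, x ≠ y ∧ π = swap x y) ∨
    (π * π = 1 ∧ ∀ i, π i ≠ i) ∨ (π ^ 2 * π ^ 2 = 1 ∧ ∀ i, (π ^ 2) i ≠ i)) π

namespace W4

def translation (g : W4) : V4 := Multiplicative.toAdd g.left

def translationParity (g : W4) : ZMod 2 := ∑ i, translation g i

lemma smul_apply (g : W4) (w : V4) (i : Fin 4) :
    (g • w) i = w (g.right⁻¹ i) + translation g i := rfl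

lemma smul_zero_eq_translation (g : W4) : g • (0 : V4) = translation g := by
  funext i; simp [smul_apply]

lemma translation_mul_apply (g h : W4) (i : Fin 4) :
    translation (g * h) i = translation g i + translation h (g.right⁻¹ i) := by
  rw [← smul_zero_eq_translation, mul_smul, smul_apply, smul_zero_eq_translation, add_comm]

lemma translation_one : translation 1 = 0 := rfl

lemma translation_sigmaW : translation sigmaW = epsV := by
  funext i; simp [translation, sigmaW]

lemma smul_add_epsV (g : W4) (w : V4) : g • (w + epsV) = g • w + epsV := by
  funext i; simp only [smul_apply, Pi.add_apply, epsV]; ring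

lemma sigmaW_smul (w : V4) : sigmaW • w = w + epsV := by
  funext i; rw [smul_apply, translation_sigmaW]; rfl

lemma add_epsV_add_epsV (w : V4) : w + epsV + epsV = w := by
  funext i; simp only [Pi.add_apply, epsV]; grind

lemma add_epsV_ne (w : V4) : w + epsV ≠ w := fun h => by
  simpa [epsV] using congrFun h 0

lemma translationParity_mul (g h : W4) :
    translationParity (g * h) = translationParity g + translationParity h := by
  simp only [translationParity, translation_mul_apply, Finset.sum_add_distrib]
  rw [Equiv.sum_comp g.right⁻¹ (translation h)]

lemma translationParity_one : translationParity 1 = 0 := by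
  simp [translationParity, translation_one]

lemma translationParity_sigmaW : translationParity sigmaW = 0 := by
  simp only [translationParity, translation_sigmaW, epsV]; decide

lemma translationParity_inv (g : W4) : translationParity g⁻¹ = translationParity g := by
  have h := translationParity_mul g⁻¹ g
  rw [inv_mul_cancel, translationParity_one] at h
  grind

lemma sigmaW_ne_one : sigmaW ≠ 1 := fun h => by
  simpa [translation_sigmaW, translation_one, epsV] using congrFun (congrArg translation h) 0

section

variable {G : Subgroup W4}

lemma translationParity_eq_zero_of_right_eq_one
    (hker : ∀ g ∈ G, g.right = 1 → g = 1 ∨ g = sigmaW) {g : W4} (hg : g ∈ G)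
    (h1 : g.right = 1) : translationParity g = 0 := by
  rcases hker g hg h1 with rfl | rfl
  exacts [translationParity_one, translationParity_sigmaW]

lemma translation_apply_right
    (hker : ∀ g ∈ G, g.right = 1 → g = 1 ∨ g = sigmaW) {g : W4} (hg : g ∈ G)
    (hinv : g.right * g.right = 1) {m : Fin 4} (hm : g.right m = m) (i : Fin 4) :
    translation g (g.right i) = translation g i := by
  -- `g * g` lies over `1`, and it is not `σ` because its translation vanishes at `m`.
  have hinv' : g.right⁻¹ = g.right := (eq_inv_of_mul_eq_one_left hinv).symm
  have hsq (j : Fin 4) : translation (g * g) j = translation g j + translation g (g.right j) := by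
    rw [translation_mul_apply, hinv']
  rcases hker (g * g) (mul_mem hg hg) (by rw [mul_right, hinv]) with h | h
  · have := hsq (g.right i)
    rw [h, ← Perm.mul_apply, hinv, Perm.one_apply, translation_one, Pi.zero_apply] at this
    grind
  · have := hsq m
    rw [h, translation_sigmaW, hm] at this
    simp only [epsV] at this
    grind

lemma translationParity_eq_of_isSwap (hsurj : ∀ π : Perm (Fin 4), ∃ g ∈ G, g.right = π)
    (hker : ∀ g ∈ G, g.right = 1 → g = 1 ∨ g = sigmaW) {g g' : W4}
    (hg : g ∈ G) (hg' : g' ∈ G) (hs : g.right.IsSwap)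
    (hs' : g'.right.IsSwap) : translationParity g = translationParity g' := by
  obtain ⟨x, y, hxy, hx⟩ := hs
  obtain ⟨x', y', hxy', hx'⟩ := hs'
  obtain ⟨ρ, hρ⟩ := isConj_iff.1 (Perm.isConj_swap hxy hxy')
  obtain ⟨r, hr, rfl⟩ := hsurj ρ
  have hconj := translationParity_eq_zero_of_right_eq_one hker
    (mul_mem (mul_mem (mul_mem hr hg) (inv_mem hr)) (inv_mem hg'))
    (by simp [hx, hx', hρ])
  simp only [translationParity_mul, translationParity_inv] at hconj
  grind

lemma le_of_exists_lift_mem (hker : ∀ g ∈ G, g.right = 1 → g = 1 ∨ g = sigmaW)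
    {H : Subgroup W4} (hσ : sigmaW ∈ H) {S : Set (Perm (Fin 4))} (hS : Subgroup.closure S = ⊤)
    (hlift : ∀ π ∈ S, ∃ g ∈ G ⊓ H, g.right = π) : G ≤ H := by
  have hmap : (G ⊓ H).map (rightHom : W4 →* Perm (Fin 4)) = ⊤ := by
    rw [eq_top_iff, ← hS, Subgroup.closure_le]
    intro π hπ
    obtain ⟨g, hg, rfl⟩ := hlift π hπ
    exact ⟨g, hg, rfl⟩
  intro g hg
  obtain ⟨h, ⟨hhG, hhH⟩, hgh⟩ := hmap ▸ Subgroup.mem_top g.right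
  rcases hker _ (mul_mem hg (inv_mem hhG)) (by simp [← hgh]) with h1 | h1
  · rwa [mul_inv_eq_one.1 h1]
  · rw [mul_inv_eq_iff_eq_mul.1 h1]
    exact mul_mem hσ hhH

lemma mem_stabilizer_pair_iff {g : W4} {w : V4} :
    g ∈ MulAction.stabilizer W4 ({w, w + epsV} : Set V4) ↔
      g • w = w ∨ g • w = w + epsV := by
  rw [MulAction.mem_stabilizer_iff, Set.smul_set_insert, Set.smul_set_singleton, smul_add_epsV,
    Set.pair_eq_pair_iff]
  constructor
  · rintro (⟨h, -⟩ | ⟨h, -⟩)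
    exacts [Or.inl h, Or.inr h]
  · rintro (h | h)
    · exact Or.inl ⟨h, by rw [h]⟩
    · exact Or.inr ⟨h, by rw [h, add_epsV_add_epsV]⟩

lemma mem_stabilizer_pair_of_forall_apply {g : W4} {w : V4} {t : ZMod 2}
    (h : ∀ i, (g • w) i = w i + t) :
    g ∈ MulAction.stabilizer W4 ({w, w + epsV} : Set V4) := by
  rw [mem_stabilizer_pair_iff]
  obtain rfl | rfl : t = 0 ∨ t = 1 := (by decide : ∀ t : ZMod 2, t = 0 ∨ t = 1) t
  · exact Or.inl (funext fun i => by simp [h])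
  · exact Or.inr (funext fun i => h i)

lemma exists_complement_of_le_stabilizer_pair
    (hsurj : ∀ π : Perm (Fin 4), ∃ g ∈ G, g.right = π) (hσ : sigmaW ∈ G)
    (hker : ∀ g ∈ G, g.right = 1 → g = 1 ∨ g = sigmaW) {w : V4}
    (hw : G ≤ MulAction.stabilizer W4 ({w, w + epsV} : Set V4)) :
    ∃ H : Subgroup W4, H ≤ G ∧ Function.Bijective (fun h : H => (h : W4).right) := by
  refine ⟨G ⊓ MulAction.stabilizer W4 w, inf_le_left, ?_, ?_⟩
  · rintro ⟨x, hx⟩ ⟨y, hy⟩ hxy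
    obtain ⟨hxG, hxw : x • w = w⟩ := Subgroup.mem_inf.1 hx
    obtain ⟨hyG, hyw : y • w = w⟩ := Subgroup.mem_inf.1 hy
    rcases hker _ (mul_mem hxG (inv_mem hyG)) (by simp_all) with h | h
    · exact Subtype.ext (mul_inv_eq_one.1 h)
    · refine absurd ?_ (add_epsV_ne w)
      rw [← sigmaW_smul, ← h, mul_smul, inv_smul_eq_iff.2 hyw.symm, hxw]
  · intro π
    obtain ⟨g, hg, rfl⟩ := hsurj π
    rcases mem_stabilizer_pair_iff.1 (hw hg) with h | h
    · exact ⟨⟨g, Subgroup.mem_inf.2 ⟨hg, h⟩⟩, rfl⟩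
    · refine ⟨⟨sigmaW * g, Subgroup.mem_inf.2 ⟨mul_mem hσ hg, ?_⟩⟩, by simp [sigmaW]⟩
      rw [MulAction.mem_stabilizer_iff, mul_smul, h, sigmaW_smul, add_epsV_add_epsV]

lemma translation_apply_eq_of_right_eq_swap
    (hker : ∀ g ∈ G, g.right = 1 → g = 1 ∨ g = sigmaW) {g : W4} (hg : g ∈ G) {x y : Fin 4}
    (hr : g.right = swap x y) : translation g y = translation g x := by
  obtain ⟨m, hmx, hmy⟩ : ∃ m : Fin 4, m ≠ x ∧ m ≠ y :=
    (by decide : ∀ x y : Fin 4, ∃ m, m ≠ x ∧ m ≠ y) x y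
  have := translation_apply_right hker hg (by rw [hr, swap_mul_self])
    (by rw [hr, swap_apply_of_ne_of_ne hmx hmy]) x
  rwa [hr, swap_apply_left] at this

lemma exists_le_stabilizer_pair (hsurj : ∀ π : Perm (Fin 4), ∃ g ∈ G, g.right = π)
    (hker : ∀ g ∈ G, g.right = 1 → g = 1 ∨ g = sigmaW)
    (hpar : ∀ g ∈ G, g.right.IsSwap → translationParity g = 0) :
    ∃ w : V4, G ≤ MulAction.stabilizer W4 ({w, w + epsV} : Set V4) := by
  obtain ⟨a, ha, har⟩ := hsurj (swap 0 1)
  obtain ⟨b, hb, hbr⟩ := hsurj (swap 1 2)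
  obtain ⟨d, hd, hdr⟩ := hsurj (swap 2 3)
  have hpa := hpar a ha ⟨0, 1, by decide, har⟩
  have hpb := hpar b hb ⟨1, 2, by decide, hbr⟩
  have hpd := hpar d hd ⟨2, 3, by decide, hdr⟩
  have ha1 := translation_apply_eq_of_right_eq_swap hker ha har
  have hb1 := translation_apply_eq_of_right_eq_swap hker hb hbr
  have hd1 := translation_apply_eq_of_right_eq_swap hker hd hdr
  simp only [translationParity, Fin.sum_univ_four] at hpa hpb hpd
  set s₁ := translation a 0 + translation a 2
  set s₂ := translation b 1 + translation b 0
  set s₃ := translation d 2 + translation d 0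
  -- The lift of `swap i (i+1)` preserves `{w, w + ε}` iff `w i + w (i+1) = sᵢ`.
  set w : V4 := ![0, s₁, s₁ + s₂, s₁ + s₂ + s₃] with hw
  have hcoord : (∀ j, (a • w) j = w j + translation a 2) ∧
      (∀ j, (b • w) j = w j + translation b 0) ∧
      (∀ j, (d • w) j = w j + translation d 0) := by
    refine ⟨fun j => ?_, fun j => ?_, fun j => ?_⟩ <;> fin_cases j <;>
    simp only [hw, smul_apply, har, hbr, hdr, swap_inv, swap_apply_def, Fin.isValue, Fin.zero_eta,
      Fin.mk_one, Fin.reduceFinMk, Fin.reduceEq, ↓reduceIte, Matrix.cons_val, zero_add] <;>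
    grind
  refine ⟨w, le_of_exists_lift_mem hker (mem_stabilizer_pair_iff.2 (Or.inr (sigmaW_smul _)))
    (Subgroup.closure_eq_top_of_mclosure_eq_top (Perm.mclosure_swap_castSucc_succ 3)) ?_⟩
  rintro _ ⟨i, rfl⟩
  fin_cases i
  exacts [⟨a, ⟨ha, mem_stabilizer_pair_of_forall_apply hcoord.1⟩, har⟩,
    ⟨b, ⟨hb, mem_stabilizer_pair_of_forall_apply hcoord.2.1⟩, hbr⟩,
    ⟨d, ⟨hd, mem_stabilizer_pair_of_forall_apply hcoord.2.2⟩, hdr⟩]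

lemma false_of_fixedPointFree_involution (hsurj : ∀ π : Perm (Fin 4), ∃ g ∈ G, g.right = π)
    (hker : ∀ g ∈ G, g.right = 1 → g = 1 ∨ g = sigmaW)
    (hodd : ∀ g ∈ G, g.right.IsSwap → translationParity g = 1) {g : W4} (hg : g ∈ G)
    (h0 : translation g = 0) (hinv : g.right * g.right = 1) (hfree : ∀ i, g.right i ≠ i) :
    False := by
  -- `a` and `a * g` have the same translation, fixed by the involutions `swap 0 (π 0)` and
  -- `swap 0 (π 0) * π`, hence by `π`; so it has even weight, though `a` lifts a transposition.
  set π := g.right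
  obtain ⟨a, ha, har⟩ := hsurj (swap 0 (π 0))
  have hπ0 : π (π 0) = 0 := by rw [← Perm.mul_apply, hinv, Perm.one_apply]
  have hcomm : π * swap 0 (π 0) = swap 0 (π 0) * π := by
    have := swap_apply_apply π 0 (π 0)
    rw [hπ0, swap_comm] at this
    nth_rw 2 [this]
    group
  obtain ⟨m, hm0, hmπ⟩ : ∃ m : Fin 4, m ≠ 0 ∧ m ≠ π 0 :=
    (by decide : ∀ x : Fin 4, ∃ m : Fin 4, m ≠ 0 ∧ m ≠ x) (π 0)
  have hτ := translation_apply_right hker ha (by rw [har, swap_mul_self])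
    (by rw [har, swap_apply_of_ne_of_ne hm0 hmπ])
  have hτπ := translation_apply_right hker (mul_mem ha hg)
    (by rw [mul_right, har, mul_assoc, ← mul_assoc π, hcomm, mul_assoc, hinv, mul_one,
      swap_mul_self])
    (m := 0) (by rw [mul_right, har, Perm.mul_apply, swap_apply_right])
  have htrans : translation (a * g) = translation a := by
    funext i; rw [translation_mul_apply, h0, Pi.zero_apply, add_zero]
  have hv (i : Fin 4) : translation a (π i) = translation a i := by
    have := hτπ i
    rwa [htrans, mul_right, har, Perm.mul_apply, ← har, hτ] at this
  have hpa := hodd a ha ⟨0, π 0, (hfree 0).symm, har⟩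
  rw [translationParity, Finset.sum_eq_zero_of_fixedPointFree_involution hinv hfree hv] at hpa
  exact zero_ne_one hpa

lemma pow_three_eq_one_of_mem_stabilizer_zero
    (hsurj : ∀ π : Perm (Fin 4), ∃ g ∈ G, g.right = π)
    (hker : ∀ g ∈ G, g.right = 1 → g = 1 ∨ g = sigmaW)
    (hodd : ∀ g ∈ G, g.right.IsSwap → translationParity g = 1) {g : W4} (hg : g ∈ G)
    (h0 : g ∈ MulAction.stabilizer W4 (0 : V4)) : g ^ 3 = 1 := by
  have htrans {x : W4} (hx : x ∈ MulAction.stabilizer W4 (0 : V4)) : translation x = 0 := by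
    rw [← smul_zero_eq_translation]; exact hx
  have hright (n : ℕ) : (g ^ n).right = g.right ^ n := by
    rw [← rightHom_eq_right, map_pow]
  rcases g.right.fin_four_cases with h3 | hs | ⟨hinv, hfree⟩ | ⟨hinv, hfree⟩
  · rcases hker _ (pow_mem hg 3) (by rw [hright, h3]) with h | h
    · exact h
    · have := htrans (pow_mem h0 3)
      rw [h, translation_sigmaW] at this
      exact absurd (congrFun this 0) (by decide)
  · have := hodd g hg hs
    rw [translationParity, htrans h0] at this
    exact absurd this (by decide)
  · exact (false_of_fixedPointFree_involution hsurj hker hodd hg (htrans h0) hinv hfree).elim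
  · rw [← hright] at hinv hfree
    exact (false_of_fixedPointFree_involution hsurj hker hodd (pow_mem hg 2)
      (htrans (pow_mem h0 2)) hinv hfree).elim

lemma card_eq_48 (hsurj : ∀ π : Perm (Fin 4), ∃ g ∈ G, g.right = π) (hσ : sigmaW ∈ G)
    (hker : ∀ g ∈ G, g.right = 1 → g = 1 ∨ g = sigmaW) : Nat.card G = 48 := by
  set p : G →* Perm (Fin 4) := rightHom.comp G.subtype
  have hp : Function.Surjective p := fun π =>
    let ⟨g, hg, hgπ⟩ := hsurj π
    ⟨⟨g, hg⟩, hgπ⟩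
  have hindex : p.ker.index = 24 := by
    rw [Subgroup.index_ker, MonoidHom.range_eq_top.2 hp, Subgroup.card_top, Nat.card_perm,
      Nat.card_eq_fintype_card, Fintype.card_fin]
    rfl
  have hcard : Nat.card p.ker = 2 := by
    refine (Nat.card_eq_two_iff' 1).2 ⟨⟨⟨sigmaW, hσ⟩, rfl⟩, ?_, ?_⟩
    · exact fun h => sigmaW_ne_one (congrArg (fun x : p.ker => ((x : G) : W4)) h)
    · rintro ⟨⟨g, hg⟩, hgk⟩ hne
      rcases hker g hg hgk with rfl | rfl
      · exact absurd rfl hne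
      · rfl
  rw [← p.ker.card_mul_index, hcard, hindex]

lemma orbit_zero_eq_univ (hsurj : ∀ π : Perm (Fin 4), ∃ g ∈ G, g.right = π)
    (hσ : sigmaW ∈ G) (hker : ∀ g ∈ G, g.right = 1 → g = 1 ∨ g = sigmaW)
    (hodd : ∀ g ∈ G, g.right.IsSwap → translationParity g = 1) :
    MulAction.orbit G (0 : V4) = Set.univ := by
  set S := MulAction.stabilizer G (0 : V4)
  have h3 : IsPGroup 3 S := fun s =>
    ⟨1, Subtype.ext (Subtype.ext (pow_three_eq_one_of_mem_stabilizer_zero hsurj hker hodd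
      (s : G).2 s.2))⟩
  obtain ⟨n, hn⟩ := IsPGroup.iff_card.1 h3
  have hdvd : 3 ^ n ∣ 48 := hn ▸ card_eq_48 hsurj hσ hker ▸ Subgroup.card_subgroup_dvd_card S
  have hn1 : n ≤ 1 := by
    by_contra h
    exact absurd ((pow_dvd_pow 3 (by omega : 2 ≤ n)).trans hdvd) (by decide)
  have hidx := S.card_mul_index
  rw [hn, card_eq_48 hsurj hσ hker, MulAction.index_stabilizer] at hidx
  refine Set.eq_of_subset_of_ncard_le (Set.subset_univ _) ?_ Set.finite_univ
  rw [Set.ncard_univ, Nat.card_eq_fintype_card, Fintype.card_fun, ZMod.card, Fintype.card_fin]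
  interval_cases n <;> omega

end

end W4

/-- **Transitivity of the monodromy action on intersection profiles.**
Let `G ≤ W = V ⋊ S₄` be a subgroup such that (i) the projection `p : G → S₄` is
surjective; (ii) the kernel of `p` restricted to `G` is exactly `{1, σ}` (i.e.
`G ∩ V = {0, ε}`); and (iii) the extension `1 → ℤ/2 → G → S₄ → 1` does not
split, i.e. no subgroup `H ≤ G` maps isomorphically onto `S₄` under `p`.
Then the affine action of `G` on `V` is transitive: `V` is a single `G`-orbit
(necessarily of size 16). -/
theorem orbit_is_everything_of_nonsplit
    (G : Subgroup W4)
    (hsurj : ∀ π : Equiv.Perm (Fin 4), ∃ g ∈ G, g.right = π)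
    (hσ : sigmaW ∈ G)
    (hker : ∀ g ∈ G, g.right = 1 → g = 1 ∨ g = sigmaW)
    (hnosplit : ¬ ∃ H : Subgroup W4, H ≤ G ∧
        Function.Bijective (fun h : H => (h : W4).right)) :
    ∀ w : V4, {u : V4 | ∃ g ∈ G, aff g w = u} = Set.univ := by
  have hodd : ∀ g ∈ G, g.right.IsSwap → W4.translationParity g = 1 := by
    by_contra! h
    obtain ⟨g₀, hg₀, hs₀, hne⟩ := h
    have hpar : ∀ g ∈ G, g.right.IsSwap → W4.translationParity g = 0 := fun g hg hs => by
      rw [W4.translationParity_eq_of_isSwap hsurj hker hg hg₀ hs hs₀]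
      exact ((by decide : ∀ t : ZMod 2, t ≠ 1 → t = 0) _ hne)
    obtain ⟨w, hw⟩ := W4.exists_le_stabilizer_pair hsurj hker hpar
    exact hnosplit (W4.exists_complement_of_le_stabilizer_pair hsurj hσ hker hw)
  intro w
  have h0 := W4.orbit_zero_eq_univ hsurj hσ hker hodd
  have hw : MulAction.orbit G w = Set.univ := by
    rwa [MulAction.orbit_eq_iff.2 (h0 ▸ Set.mem_univ w)]
  refine Set.eq_univ_of_forall fun u => ?_
  obtain ⟨g, rfl⟩ := MulAction.mem_orbit_iff.1 (hw ▸ Set.mem_univ u)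
  exact ⟨g, g.2, rfl⟩
end

section
/- Let G be a subgroup of W = V ⋊ S_4 such that the projection p : G → S_4 is surjective and the kernel of p restricted to G is exactly {(0, id), σ}, i.e. G ∩ V = {0, ε}. If some element w ∈ V has G-orbit of cardinality 2 under the affine action of G on V, then there exists a subgroup H ≤ G for which p restricts to an isomorphism from H onto S_4 (i.e. the extension 1 → ℤ/2ℤ → G → S_4 → 1 splits). Consequently, if the extension does not split, then no G-orbit on V has cardinality 2. -/
section

open MulAction

variable {W X Q : Type*} [Group W] [MulAction W X] [Group Q] {G : Subgroup W} {s : W} {x : X}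

theorem smul_eq_or_smul_eq_of_ncard_orbit_eq_two (hs : s ∈ G) (hsx : s • x ≠ x)
    (horb : {u : X | ∃ g ∈ G, g • x = u}.ncard = 2) {g : W} (hg : g ∈ G) :
    g • x = x ∨ g • x = s • x := by
  have hpair : {x, s • x} ⊆ {u : X | ∃ g ∈ G, g • x = u} := by
    rintro _ (rfl | rfl)
    exacts [⟨1, G.one_mem, one_smul W _⟩, ⟨s, hs, rfl⟩]
  have horbit : {u : X | ∃ g ∈ G, g • x = u} = {x, s • x} :=
    (Set.eq_of_subset_of_ncard_le hpair (by rw [horb, Set.ncard_pair hsx.symm])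
      (Set.finite_of_ncard_ne_zero (by omega))).symm
  have hgx : g • x ∈ {u : X | ∃ g ∈ G, g • x = u} := ⟨g, hg, rfl⟩
  rwa [horbit] at hgx

theorem injective_restrict_stabilizer (p : W →* Q)
    (hker : ∀ g ∈ G, p g = 1 → g = 1 ∨ g = s) (hsx : s • x ≠ x) :
    Function.Injective (fun h : (G ⊓ stabilizer W x : Subgroup W) => p h) := by
  refine (injective_iff_map_eq_one (p.comp (G ⊓ stabilizer W x).subtype)).mpr ?_
  rintro ⟨h, hGx⟩ hp
  obtain ⟨hG, hx⟩ := Subgroup.mem_inf.mp hGx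
  rcases hker h hG hp with rfl | rfl
  · rfl
  · exact absurd hx hsx

theorem surjective_restrict_stabilizer (p : W →* Q) (hsurj : ∀ q, ∃ g ∈ G, p g = q)
    (hs : s ∈ G) (hps : p s = 1) (horbit : ∀ g ∈ G, g • x = x ∨ g • x = s • x) :
    Function.Surjective (fun h : (G ⊓ stabilizer W x : Subgroup W) => p h) := by
  intro q
  obtain ⟨g, hg, rfl⟩ := hsurj q
  rcases horbit g hg with hgx | hgx
  · exact ⟨⟨g, Subgroup.mem_inf.mpr ⟨hg, hgx⟩⟩, rfl⟩
  · have hfix : s⁻¹ * g ∈ stabilizer W x := by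
      rw [mem_stabilizer_iff, mul_smul, hgx, inv_smul_smul]
    exact ⟨⟨s⁻¹ * g, Subgroup.mem_inf.mpr ⟨G.mul_mem (G.inv_mem hs) hg, hfix⟩⟩, by simp [hps]⟩

theorem bijective_restrict_stabilizer_of_ncard_orbit_eq_two (p : W →* Q)
    (hsurj : ∀ q, ∃ g ∈ G, p g = q) (hs : s ∈ G) (hps : p s = 1)
    (hker : ∀ g ∈ G, p g = 1 → g = 1 ∨ g = s) (hsx : s • x ≠ x)
    (horb : {u : X | ∃ g ∈ G, g • x = u}.ncard = 2) :
    Function.Bijective (fun h : (G ⊓ stabilizer W x : Subgroup W) => p h) :=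
  ⟨injective_restrict_stabilizer p hker hsx, surjective_restrict_stabilizer p hsurj hs hps
    fun _ hg => smul_eq_or_smul_eq_of_ncard_orbit_eq_two hs hsx horb hg⟩

end

theorem aff_one (u : V4) : aff 1 u = u := by
  funext i
  simp [aff]

theorem toAdd_permHom_apply (π : Equiv.Perm (Fin 4)) (v : Multiplicative V4) (i : Fin 4) :
    Multiplicative.toAdd (permHom π v) i = Multiplicative.toAdd v (π⁻¹ i) :=
  rfl

theorem aff_mul (g h : W4) (u : V4) : aff (g * h) u = aff g (aff h u) := by
  funext i
  simp only [aff, SemidirectProduct.mul_right, SemidirectProduct.mul_left, mul_inv_rev,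
    Equiv.Perm.coe_mul, Function.comp_apply, toAdd_mul, Pi.add_apply, toAdd_permHom_apply]
  ring

instance inst_s3 : MulAction W4 V4 where
  smul := aff
  one_smul := aff_one
  mul_smul := aff_mul

theorem aff_sigmaW_ne (u : V4) : aff sigmaW u ≠ u := by
  intro h
  simpa [aff, sigmaW, epsV] using congrFun h 0

/-- **An orbit of size 2 forces the extension to split.**
Let `G ≤ W = V ⋊ S₄` be a subgroup such that the projection `p : G → S₄` is
surjective and the kernel of `p` restricted to `G` is exactly `{1, σ}` (i.e.
`G ∩ V = {0, ε}`).  If some `w ∈ V` has `G`-orbit of cardinality 2 under the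
affine action of `G` on `V`, then some subgroup `H ≤ G` maps isomorphically
onto `S₄` under `p`, i.e. the extension `1 → ℤ/2 → G → S₄ → 1` splits.
(Consequently, if the extension does not split, no `G`-orbit on `V` has
cardinality 2.) -/
theorem splits_of_orbit_of_size_two
    (G : Subgroup W4)
    (hsurj : ∀ π : Equiv.Perm (Fin 4), ∃ g ∈ G, g.right = π)
    (hσ : sigmaW ∈ G)
    (hker : ∀ g ∈ G, g.right = 1 → g = 1 ∨ g = sigmaW)
    (w : V4)
    (horb : Set.ncard {u : V4 | ∃ g ∈ G, aff g w = u} = 2) :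
    ∃ H : Subgroup W4, H ≤ G ∧
      Function.Bijective (fun h : H => (h : W4).right) :=
  ⟨G ⊓ MulAction.stabilizer W4 w, inf_le_left,
    bijective_restrict_stabilizer_of_ncard_orbit_eq_two SemidirectProduct.rightHom hsurj hσ rfl
      hker (aff_sigmaW_ne w) horb⟩
end

section
/- For all complex numbers s, t, x, y, z, w, if (s, t) ≠ (0, 0) and (x, y, z, w) ≠ (0, 0, 0, 0), then the six quantities s·x², t·y², (t+s)·z², (t+2s)·w², x³ + z³ + 2w³, and y³ + z³ + w³ do not all vanish simultaneously. (These are, up to the nonzero factor 3, the partial derivatives of the bihomogeneous polynomial F = s·x³ + t·y³ + (t+s)·z³ + (t+2s)·w³ of bidegree (1,3); by the Jacobian criterion and the bihomogeneous Euler relations, this statement expresses that the hypersurface F = 0 in ℙ¹ × ℙ³ over ℂ is smooth.) -/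
/-!
If `s = 0` (resp. `t = 0`) the other three coefficients are nonzero, which kills three of the
coordinates, and one of the two cubic equations kills the last one. If `s` and `t` are both
nonzero then `x = y = 0`, and `z³ + 2w³ = z³ + w³ = 0` forces `z = w = 0`.
-/

section

variable {R : Type*} [CommRing R] [IsDomain R]

theorem eq_zero_of_mul_pow_eq_zero {c a : R} {n : ℕ} (hc : c ≠ 0) (hn : n ≠ 0)
    (h : c * a ^ n = 0) : a = 0 :=
  (pow_eq_zero_iff hn).mp ((mul_eq_zero.mp h).resolve_left hc)

theorem diagonal_cubic_fibration_critical_point_eq_zero (h2 : (2 : R) ≠ 0) {s t x y z w : R}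
    (hst : s ≠ 0 ∨ t ≠ 0) (hx : s * x ^ 2 = 0) (hy : t * y ^ 2 = 0)
    (hz : (t + s) * z ^ 2 = 0) (hw : (t + 2 * s) * w ^ 2 = 0)
    (hxzw : x ^ 3 + z ^ 3 + 2 * w ^ 3 = 0) (hyzw : y ^ 3 + z ^ 3 + w ^ 3 = 0) :
    x = 0 ∧ y = 0 ∧ z = 0 ∧ w = 0 := by
  have cube_eq_zero {a : R} (h : a ^ 3 = 0) : a = 0 := (pow_eq_zero_iff three_ne_zero).mp h
  by_cases hs : s = 0
  · subst hs
    have ht : t ≠ 0 := hst.resolve_left (not_not.mpr rfl)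
    obtain rfl : y = 0 := eq_zero_of_mul_pow_eq_zero ht two_ne_zero hy
    obtain rfl : z = 0 := eq_zero_of_mul_pow_eq_zero (by simpa using ht) two_ne_zero hz
    obtain rfl : w = 0 := cube_eq_zero (by simpa using hyzw)
    exact ⟨cube_eq_zero (by simpa using hxzw), rfl, rfl, rfl⟩
  obtain rfl : x = 0 := eq_zero_of_mul_pow_eq_zero hs two_ne_zero hx
  by_cases ht : t = 0
  · subst ht
    obtain rfl : z = 0 := eq_zero_of_mul_pow_eq_zero (by simpa using hs) two_ne_zero hz
    obtain rfl : w = 0 := eq_zero_of_mul_pow_eq_zero (by simpa [h2] using hs) two_ne_zero hw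
    exact ⟨rfl, cube_eq_zero (by simpa using hyzw), rfl, rfl⟩
  obtain rfl : y = 0 := eq_zero_of_mul_pow_eq_zero ht two_ne_zero hy
  obtain rfl : w = 0 := cube_eq_zero (by linear_combination hxzw - hyzw)
  exact ⟨rfl, rfl, cube_eq_zero (by simpa using hyzw), rfl⟩

end

/-- **Smoothness of the diagonal cubic surface fibration.**
For all complex numbers `s, t, x, y, z, w`, if `(s, t) ≠ (0, 0)` and
`(x, y, z, w) ≠ (0, 0, 0, 0)`, then the six quantities
`s·x²`, `t·y²`, `(t+s)·z²`, `(t+2s)·w²`, `x³ + z³ + 2w³`, `y³ + z³ + w³`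
do not all vanish simultaneously.  (Up to the nonzero factor 3, these are the
partial derivatives of `F = s·x³ + t·y³ + (t+s)·z³ + (t+2s)·w³`; by the Jacobian
criterion and the bihomogeneous Euler relations this says that the hypersurface
`F = 0` in `ℙ¹ × ℙ³` over `ℂ` is smooth.) -/
theorem diagonal_cubic_fibration_smooth
    (s t x y z w : ℂ)
    (hst : (s, t) ≠ (0, 0))
    (hxyzw : (x, y, z, w) ≠ ((0 : ℂ), (0 : ℂ), (0 : ℂ), (0 : ℂ))) :
    ¬ (s * x ^ 2 = 0 ∧ t * y ^ 2 = 0 ∧ (t + s) * z ^ 2 = 0 ∧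
        (t + 2 * s) * w ^ 2 = 0 ∧ x ^ 3 + z ^ 3 + 2 * w ^ 3 = 0 ∧
        y ^ 3 + z ^ 3 + w ^ 3 = 0) := by
  rintro ⟨hx, hy, hz, hw, hxzw, hyzw⟩
  have hst' : s ≠ 0 ∨ t ≠ 0 := by simpa only [ne_eq, Prod.mk.injEq, not_and_or] using hst
  obtain ⟨rfl, rfl, rfl, rfl⟩ := diagonal_cubic_fibration_critical_point_eq_zero two_ne_zero
    hst' hx hy hz hw hxzw hyzw
  exact hxyzw rfl
end
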